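/- arXiv:2208.03841 — 5 statements merged into one kernel-verified Lean document; each statement's English description precedes it below -/
import Mathlib

section
/- Let η be a partial action of a group G on a set X. Define a relation R on G × X by (g,x) R (h,y) iff x ∈ X_{g⁻¹h} and η_{h⁻¹g}(x) = y. Then R is an equivalence relation on G × X. -/
open Set

structure PartialAction (G : Type*) (X : Type*) [Group G] where
  D : G → Set X
  act : G → X → X
  D_one : D 1 = Set.univ
  act_one : ∀ x, act 1 x = x
  bijOn : ∀ g : G, Set.BijOn (act g) (D g⁻¹) (D g)
  image_inter : ∀ g h : G, act g '' (D g⁻¹ ∩ D h) = D g ∩ D (g * h)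
  comp : ∀ g h : G, ∀ x ∈ D h⁻¹ ∩ D (h⁻¹ * g⁻¹), act g (act h x) = act (g * h) x

/-- The domain `G*X = {(g,x) : x ∈ X_{g⁻¹}}` of a partial action. -/
def PartialAction.domSet {G X : Type*} [Group G] (pa : PartialAction G X) : Set (G × X) :=
  {p : G × X | p.2 ∈ pa.D p.1⁻¹}

/-- The relation `R` on `G × X`: `(g,x) R (h,y)` iff `x ∈ X_{g⁻¹h}` and `η_{h⁻¹g}(x) = y`. -/
def PartialAction.envRel {G X : Type*} [Group G] (pa : PartialAction G X) :
    G × X → G × X → Prop :=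
  fun p q => p.2 ∈ pa.D (p.1⁻¹ * q.1) ∧ pa.act (q.1⁻¹ * p.1) p.2 = q.2

/-- The orbit equivalence relation of a partial action. -/
def PartialAction.orbitRel {G X : Type*} [Group G] (pa : PartialAction G X) : X → X → Prop :=
  fun x y => ∃ g : G, x ∈ pa.D g⁻¹ ∧ pa.act g x = y

/-- A topological partial action: open domains, each `η_g` a homeomorphism onto its image. -/
structure TopPartialAction (G : Type*) (X : Type*) [Group G] [TopologicalSpace G]
    [TopologicalSpace X] extends PartialAction G X where
  isOpen_D : ∀ g : G, IsOpen (D g)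
  continuousOn_act : ∀ g : G, ContinuousOn (act g) (D g⁻¹)

/-- A continuous topological partial action: the evaluation map on `G*X` is continuous. -/
structure ContPartialAction (G : Type*) (X : Type*) [Group G] [TopologicalSpace G]
    [TopologicalSpace X] extends TopPartialAction G X where
  continuousOn_eval :
    ContinuousOn (fun p : G × X => act p.1 p.2) {p : G × X | p.2 ∈ D p.1⁻¹}

/-- The relation `R` defining the enveloping space is an equivalence relation. -/
theorem statement2 {G X : Type*} [Group G] (pa : PartialAction G X) :
    Equivalence pa.envRel := by
  constructor
  · rintro ⟨g, x⟩
    refine ⟨?_, ?_⟩ <;> simp [PartialAction.envRel, pa.D_one, pa.act_one]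
  · rintro ⟨g, x⟩ ⟨h, y⟩ ⟨hx, hy⟩
    refine ⟨?_, ?_⟩
    · have := (pa.bijOn (h⁻¹ * g)).mapsTo
      simp only [mul_inv_rev, inv_inv] at this
      have := this hx
      rw [hy] at this
      simpa [mul_assoc] using this
    · simp only at *
      have hc := pa.comp (g⁻¹ * h) (h⁻¹ * g) x
        (by simp [mul_inv_rev, pa.D_one, hx, mul_assoc])
      rw [hy] at hc
      rw [show g⁻¹ * h * (h⁻¹ * g) = 1 by group] at hc
      rw [hc, pa.act_one]
  · rintro ⟨g, x⟩ ⟨h, y⟩ ⟨k, z⟩ ⟨hx, hy⟩ ⟨hy2, hz⟩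
    simp only [PartialAction.envRel] at *
    have hyD : y ∈ pa.D (h⁻¹ * g) := by
      have := (pa.bijOn (h⁻¹ * g)).mapsTo
      simp only [mul_inv_rev, inv_inv] at this
      have := this hx
      rwa [hy] at this
    have hxy : pa.act (g⁻¹ * h) y = x := by
      have hc := pa.comp (g⁻¹ * h) (h⁻¹ * g) x
        (by simp [mul_inv_rev, pa.D_one, hx, mul_assoc])
      rw [hy] at hc
      rw [show g⁻¹ * h * (h⁻¹ * g) = 1 by group] at hc
      rw [hc, pa.act_one]
    have himg := pa.image_inter (g⁻¹ * h) (h⁻¹ * k)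
    have hxin : x ∈ pa.D (g⁻¹ * h) ∩ pa.D (g⁻¹ * h * (h⁻¹ * k)) := by
      rw [← himg]
      exact ⟨y, ⟨by simpa [mul_inv_rev] using hyD, hy2⟩, hxy⟩
    have hxk : x ∈ pa.D (g⁻¹ * k) := by
      have := hxin.2
      rwa [show g⁻¹ * h * (h⁻¹ * k) = g⁻¹ * k by group] at this
    refine ⟨hxk, ?_⟩
    have hc := pa.comp (k⁻¹ * h) (h⁻¹ * g) x
      (by
        constructor
        · simpa [mul_inv_rev] using hx
        · rw [show (h⁻¹ * g)⁻¹ * (k⁻¹ * h)⁻¹ = g⁻¹ * k by group]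
          exact hxk)
    rw [hy] at hc
    rw [show k⁻¹ * h * (h⁻¹ * g) = k⁻¹ * g by group] at hc
    rw [← hc]; exact hz
end

section
/- Let η be a partial action of a group G on a set X, R the equivalence relation on G × X given by (g,x) R (h,y) iff x ∈ X_{g⁻¹h} and η_{h⁻¹g}(x) = y, and X_G = (G × X)/R with classes [g,x]. Then the map μ : G × X_G → X_G, μ(g,[h,x]) = [gh,x], is a well-defined group action of G on X_G. -/
open Set

/-- The map `μ(g,[h,x]) = [gh,x]` is a well-defined action of `G` on the
enveloping space `X_G = (G × X)/R`. -/
theorem statement3 {G X : Type*} [Group G] (pa : PartialAction G X) :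
    ∃ μ : G → Quot pa.envRel → Quot pa.envRel,
      (∀ (g h : G) (x : X),
        μ g (Quot.mk pa.envRel (h, x)) = Quot.mk pa.envRel (g * h, x)) ∧
      (∀ q, μ 1 q = q) ∧
      (∀ (g h : G) (q : Quot pa.envRel), μ g (μ h q) = μ (g * h) q) := by
  refine ⟨fun g => Quot.map (fun p => (g * p.1, p.2)) ?_, fun g h x => rfl, ?_, ?_⟩
  · rintro ⟨h, x⟩ ⟨k, y⟩ ⟨hx, hy⟩
    constructor
    · simpa [mul_assoc, PartialAction.envRel] using hx
    · simpa [mul_assoc, PartialAction.envRel] using hy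
  · intro q
    refine Quot.inductionOn q fun p => ?_
    simp [Quot.map]
  · intro g h q
    refine Quot.inductionOn q fun p => ?_
    simp [Quot.map, mul_assoc]
end

section
/- Let η be a partial action of a group G on a set X with enveloping space X_G = (G × X)/R and enveloping action μ(g,[h,x]) = [gh,x]. Then the map ι : X → X_G, ι(x) = [1,x], is injective, and for every g ∈ G and x ∈ X: g·x is defined (i.e. x ∈ X_{g⁻¹}) if and only if μ(g, ι(x)) ∈ ι(X), and in that case μ(g, ι(x)) = ι(η_g(x)). -/
open Set

namespace PartialAction

variable {G X : Type*} [Group G] (pa : PartialAction G X)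

lemma mem_D_one (x : X) : x ∈ pa.D 1 := by rw [pa.D_one]; trivial

lemma act_inv_act {s : G} {x : X} (hx : x ∈ pa.D s⁻¹) :
    pa.act s⁻¹ (pa.act s x) = x := by
  have := pa.comp s⁻¹ s x ⟨hx, by simpa using pa.mem_D_one x⟩
  simpa [pa.act_one] using this

lemma envRel_refl (p : G × X) : pa.envRel p p := by
  constructor
  · simpa using pa.mem_D_one p.2
  · simpa using pa.act_one p.2

lemma envRel_symm {p q : G × X} (h : pa.envRel p q) : pa.envRel q p := by
  obtain ⟨h1, h2⟩ := h
  set s := q.1⁻¹ * p.1 with hs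
  have hx : p.2 ∈ pa.D s⁻¹ := by simpa [hs, mul_inv_rev] using h1
  have hy : q.2 ∈ pa.D s := h2 ▸ (pa.bijOn s).mapsTo hx
  constructor
  · simpa [hs, mul_inv_rev] using hy
  · have : pa.act s⁻¹ (pa.act s p.2) = p.2 := pa.act_inv_act hx
    rw [← h2]
    simpa [hs, mul_inv_rev] using this

lemma envRel_trans {p q r : G × X} (h : pa.envRel p q) (h' : pa.envRel q r) :
    pa.envRel p r := by
  obtain ⟨h1, h2⟩ := h
  obtain ⟨h3, h4⟩ := h'
  set s := q.1⁻¹ * p.1 with hs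
  set t := r.1⁻¹ * q.1 with ht
  have hx : p.2 ∈ pa.D s⁻¹ := by simpa [hs, mul_inv_rev] using h1
  have hy : q.2 ∈ pa.D s ∩ pa.D t⁻¹ := by
    refine ⟨h2 ▸ (pa.bijOn s).mapsTo hx, ?_⟩
    simpa [ht, mul_inv_rev] using h3
  have hmem : p.2 ∈ pa.D s⁻¹ ∩ pa.D (s⁻¹ * t⁻¹) := by
    have : pa.act s⁻¹ q.2 ∈ pa.D s⁻¹ ∩ pa.D (s⁻¹ * t⁻¹) := by
      rw [← pa.image_inter s⁻¹ t⁻¹]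
      exact mem_image_of_mem _ (by simpa using hy)
    rwa [← h2, pa.act_inv_act hx] at this
  constructor
  · have : p.1⁻¹ * r.1 = (s⁻¹ * t⁻¹)⁻¹⁻¹ := by simp [hs, ht, mul_inv_rev, mul_assoc]
    rw [this, inv_inv]
    exact hmem.2
  · have hc := pa.comp t s p.2 (by simpa [mul_inv_rev] using hmem)
    have hts : t * s = r.1⁻¹ * p.1 := by simp [hs, ht, mul_assoc]
    rw [← hts, ← hc, h2, h4]

lemma envRel_of_eqvGen {p q : G × X} (h : Relation.EqvGen pa.envRel p q) :
    pa.envRel p q := by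
  induction h with
  | rel _ _ h => exact h
  | refl _ => exact pa.envRel_refl _
  | symm _ _ _ ih => exact pa.envRel_symm ih
  | trans _ _ _ _ _ ih1 ih2 => exact pa.envRel_trans ih1 ih2

end PartialAction


/-- The canonical map `ι : X → X_G`, `ι(x) = [1,x]`, is injective, and the
enveloping action restricts on `ι(X)` exactly to the original partial action. -/
theorem statement4 {G X : Type*} [Group G] (pa : PartialAction G X) :
    Function.Injective (fun x : X => Quot.mk pa.envRel (1, x)) ∧
    ∀ (g : G) (x : X),
      (x ∈ pa.D g⁻¹ ↔
        Quot.mk pa.envRel (g, x) ∈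
          Set.range (fun x : X => Quot.mk pa.envRel (1, x))) ∧
      (x ∈ pa.D g⁻¹ →
        Quot.mk pa.envRel (g, x) = Quot.mk pa.envRel (1, pa.act g x)) := by
  have key : ∀ {p q : G × X}, Quot.mk pa.envRel p = Quot.mk pa.envRel q → pa.envRel p q :=
    fun h => pa.envRel_of_eqvGen (Quot.eqvGen_exact h)
  have mk_eq : ∀ (g : G) (x : X), x ∈ pa.D g⁻¹ →
      Quot.mk pa.envRel (g, x) = Quot.mk pa.envRel (1, pa.act g x) := by
    intro g x hx
    apply Quot.sound
    exact ⟨by simpa using hx, by simp⟩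
  refine ⟨?_, fun g x => ⟨⟨fun hx => ?_, fun ⟨y, hy⟩ => ?_⟩, mk_eq g x⟩⟩
  · intro x y h
    have := key h
    obtain ⟨_, h2⟩ := this
    simpa [pa.act_one] using h2
  · exact ⟨pa.act g x, (mk_eq g x hx).symm⟩
  · have := key hy.symm
    simpa using this.1
end

section
/- Let β : G × Y → Y be a continuous action of a topological group G on a topological space Y, let X ⊆ Y be an open subset with G·X = Y, and let η be the induced partial action of G on X (with X_g = X ∩ β_g(X)). Then the map α : X_G → Y, α([g,x]) = β(g,x), is a well-defined G-equivariant homeomorphism from the enveloping space X_G onto Y. -/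
open Set Pointwise

/-- If `η` is the partial action induced on an open subset `X` of a `G`-space `Y`
with `G·X = Y`, then `α([g,x]) = g • x` is a well-defined `G`-equivariant
homeomorphism `X_G → Y`. -/
theorem statement8 {G Y : Type*} [Group G] [TopologicalSpace G] [TopologicalSpace Y]
    [MulAction G Y] [ContinuousSMul G Y]
    (Xs : Set Y) (hXopen : IsOpen Xs) (hcover : ∀ y : Y, ∃ g : G, y ∈ g • Xs)
    (pa : TopPartialAction G Xs)
    (hD : ∀ (g : G) (x : Xs), x ∈ pa.D g ↔ (x : Y) ∈ g • Xs)
    (hact : ∀ (g : G) (x : Xs), x ∈ pa.D g⁻¹ → (pa.act g x : Y) = g • (x : Y)) :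
    ∃ α : Quot pa.envRel → Y,
      (∀ (g : G) (x : Xs), α (Quot.mk pa.envRel (g, x)) = g • (x : Y)) ∧
      IsHomeomorph α ∧
      (∀ (g h : G) (x : Xs),
        α (Quot.mk pa.envRel (g * h, x)) = g • α (Quot.mk pa.envRel (h, x))) := by
  classical
  set f : G × Xs → Y := fun p => p.1 • (p.2 : Y) with hf
  have hresp : ∀ p q, pa.envRel p q → f p = f q := by
    rintro ⟨g, x⟩ ⟨h, y⟩ ⟨hmem, hacteq⟩
    have hx : x ∈ pa.D (h⁻¹ * g)⁻¹ := by
      simpa [mul_inv_rev] using hmem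
    have h1 := hact (h⁻¹ * g) x hx
    rw [hacteq] at h1
    show g • (x : Y) = h • (y : Y)
    rw [h1, smul_smul]
    simp [mul_assoc]
  refine ⟨Quot.lift f hresp, fun g x => rfl, ?_, fun g h x => ?_⟩
  · have hcont : Continuous f :=
      continuous_fst.smul (continuous_subtype_val.comp continuous_snd)
    have hshear : IsOpenMap (fun p : G × Y => p.1 • p.2) := by
      intro U hU
      have himg : (fun p : G × Y => p.1 • p.2) '' U = ⋃ g : G, g • {y | (g, y) ∈ U} := by
        ext y
        simp only [Set.mem_image, Set.mem_iUnion, Set.mem_smul_set, Set.mem_setOf_eq,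
          Prod.exists]
      rw [himg]
      exact isOpen_iUnion fun g => ((hU.preimage (Continuous.prodMk_right g)).smul g)
    have hmapopen : IsOpenMap f := by
      have h2 : IsOpenMap (Prod.map (id : G → G) ((↑) : Xs → Y)) :=
        IsOpenMap.prodMap IsOpenMap.id hXopen.isOpenMap_subtype_val
      have : f = (fun p : G × Y => p.1 • p.2) ∘ Prod.map id ((↑) : Xs → Y) := rfl
      rw [this]
      exact hshear.comp h2
    refine ⟨continuous_quot_lift hresp hcont, ?_, ?_, ?_⟩
    · intro U hU
      have hpre : IsOpen (Quot.mk pa.envRel ⁻¹' U) :=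
        hU.preimage continuous_quot_mk
      have himg : Quot.lift f hresp '' U = f '' (Quot.mk pa.envRel ⁻¹' U) := by
        ext y
        constructor
        · rintro ⟨a, ha, rfl⟩
          obtain ⟨p, rfl⟩ := Quot.exists_rep a
          exact ⟨p, ha, rfl⟩
        · rintro ⟨p, hp, rfl⟩
          exact ⟨Quot.mk _ p, hp, rfl⟩
      rw [himg]
      exact hmapopen _ hpre
    · intro a b hab
      induction a using Quot.ind with | _ p =>
      induction b using Quot.ind with | _ q =>
      obtain ⟨g, x⟩ := p
      obtain ⟨h, y⟩ := q
      have heq : g • (x : Y) = h • (y : Y) := hab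
      apply Quot.sound
      have hxval : (x : Y) = (g⁻¹ * h) • (y : Y) := by
        rw [mul_smul, ← heq, inv_smul_smul]
      have hmem : x ∈ pa.D (g⁻¹ * h) := by
        rw [hD]
        rw [hxval]
        exact Set.smul_mem_smul_set y.2
      have hmem' : x ∈ pa.D (h⁻¹ * g)⁻¹ := by simpa [mul_inv_rev] using hmem
      refine ⟨hmem, Subtype.ext ?_⟩
      rw [hact (h⁻¹ * g) x hmem', mul_smul, heq, inv_smul_smul]
    · intro y
      obtain ⟨g, hy⟩ := hcover y
      obtain ⟨x, hx, rfl⟩ := hy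
      exact ⟨Quot.mk _ (g, ⟨x, hx⟩), rfl⟩
  · show (g * h) • (x : Y) = g • (h • (x : Y))
    rw [mul_smul]
end

section
/- Let G be a compact topological group and η : G*X → X a continuous topological partial action with G*X closed in G × X. Then the orbit quotient map π_G : X → X/∼_G is a perfect map: it is closed, and every fiber π_G⁻¹(π_G(x)) = {η_g(x) : g ∈ G, x ∈ X_{g⁻¹}} is compact. -/
open Set

-- aux

section Aux
variable {G X : Type*} [Group G]

theorem PartialAction.orbitRel_equiv (pa : PartialAction G X) : Equivalence pa.orbitRel := by
  constructor
  · intro x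
    exact ⟨1, by simp [pa.D_one], pa.act_one x⟩
  · rintro x y ⟨g, hx, rfl⟩
    refine ⟨g⁻¹, by simpa using (pa.bijOn g).mapsTo hx, ?_⟩
    rw [pa.comp g⁻¹ g x ⟨hx, by simp [pa.D_one]⟩, inv_mul_cancel, pa.act_one]
  · rintro x y z ⟨g, hx, rfl⟩ ⟨h, hy, rfl⟩
    have hyg : pa.act g x ∈ pa.D g ∩ pa.D (g * (g⁻¹ * h⁻¹)) := by
      constructor
      · exact (pa.bijOn g).mapsTo hx
      · simpa using hy
    rw [← pa.image_inter g (g⁻¹ * h⁻¹)] at hyg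
    obtain ⟨x', ⟨hx'1, hx'2⟩, hx'3⟩ := hyg
    obtain rfl : x' = x := (pa.bijOn g).injOn hx'1 hx hx'3
    refine ⟨h * g, by simpa [mul_inv_rev] using hx'2, ?_⟩
    rw [← pa.comp h g x' ⟨hx, hx'2⟩]

end Aux

/-- If `G` is compact and `G*X` closed, the orbit quotient map `π_G` is perfect:
closed with compact fibers. -/
theorem statement12 {G X : Type*} [Group G] [TopologicalSpace G] [TopologicalSpace X]
    [CompactSpace G] (pa : ContPartialAction G X)
    (hclosed : IsClosed pa.domSet) :
    IsClosedMap (Quot.mk pa.orbitRel) ∧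
    ∀ x : X, IsCompact (Quot.mk pa.orbitRel ⁻¹' {Quot.mk pa.orbitRel x}) := by
  have hequiv := pa.orbitRel_equiv
  have hkey : ∀ x y : X, Quot.mk pa.toPartialAction.orbitRel y = Quot.mk _ x ↔
      pa.toPartialAction.orbitRel y x := fun x y => by
    rw [Quot.eq, hequiv.eqvGen_iff]
  constructor
  · intro C hC
    rw [← (isQuotientMap_quot_mk (r := pa.toPartialAction.orbitRel)).isClosed_preimage]
    have hsat : Quot.mk pa.toPartialAction.orbitRel ⁻¹' (Quot.mk _ '' C) =
        Prod.snd '' (pa.domSet ∩ (fun p : G × X => pa.act p.1 p.2) ⁻¹' C) := by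
      ext y
      simp only [Set.mem_preimage, Set.mem_image, Set.mem_inter_iff, Prod.exists]
      constructor
      · rintro ⟨c, hc, hcy⟩
        obtain ⟨g, hy, hgy⟩ := (hkey c y).mp hcy.symm
        exact ⟨g, y, ⟨hy, by rwa [hgy]⟩, rfl⟩
      · rintro ⟨g, y', ⟨hy, hgc⟩, rfl⟩
        exact ⟨pa.act g y', hgc, ((hkey _ _).mpr ⟨g, hy, rfl⟩).symm⟩
    rw [hsat]
    exact isClosedMap_snd_of_compactSpace _
      (pa.continuousOn_eval.preimage_isClosed_of_isClosed hclosed hC)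
  · intro x
    have hfib : Quot.mk pa.toPartialAction.orbitRel ⁻¹' {Quot.mk _ x} =
        (fun g => pa.act g x) '' {g : G | x ∈ pa.D g⁻¹} := by
      ext y
      simp only [Set.mem_preimage, Set.mem_singleton_iff, Set.mem_image, Set.mem_setOf_eq]
      constructor
      · intro h
        obtain ⟨g, hy, hgy⟩ := hequiv.symm ((hkey x y).mp h)
        exact ⟨g, hy, hgy⟩
      · rintro ⟨g, hx, rfl⟩
        exact (hkey _ _).mpr (hequiv.symm ⟨g, hx, rfl⟩)
    rw [hfib]
    have hGx : IsCompact {g : G | x ∈ pa.D g⁻¹} := by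
      have : IsClosed {g : G | x ∈ pa.D g⁻¹} :=
        hclosed.preimage (f := fun g : G => (g, x)) (by fun_prop)
      exact this.isCompact
    exact hGx.image_of_continuousOn <| by
      have := pa.continuousOn_eval.comp (f := fun g : G => (g, x))
        (continuous_id.prodMk continuous_const).continuousOn
        (fun g hg => hg)
      exact this
end
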